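/- arXiv:1211.0606 — 2 statements merged into one kernel-verified Lean document; each statement's English description precedes it below -/
import Mathlib

section
/- No word from D is a proper prefix of another word from D: if u ∈ D and u·v ∈ D, then v = ε. (D is a prefix code.) -/
/-- The morphism β with β(0)=01, β(1)=10, extended to words. -/
def beta (x : List Bool) : List Bool := x.flatMap (fun b => [b, !b])

/-- The map ex : x ↦ β(x)·11·0^(|x|²+3)·β(x)·11·0^(|x|²+3). -/
def ex (x : List Bool) : List Bool :=
  beta x ++ [true, true] ++ List.replicate (x.length ^ 2 + 3) false ++
  beta x ++ [true, true] ++ List.replicate (x.length ^ 2 + 3) false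

/-- D is the image of ex. -/
def D : Set (List Bool) := Set.range ex

lemma beta_cons (b : Bool) (x : List Bool) : beta (b :: x) = b :: (!b) :: beta x := by
  simp [beta]

lemma beta_length (x : List Bool) : (beta x).length = 2 * x.length := by
  induction x with
  | nil => simp [beta]
  | cons b x ih => simp [beta_cons, ih]; omega

lemma no_marker_prefix (x : List Bool) : ∀ y, ¬ (beta x ++ [true, true] <+: beta y) := by
  induction x with
  | nil =>
    intro y h
    cases y with
    | nil => simp [beta] at h
    | cons b y' =>
      rw [beta_cons] at h
      simp only [beta, List.flatMap_nil, List.nil_append, List.cons_prefix_cons] at h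
      obtain ⟨h1, h2, _⟩ := h
      subst h1; simp at h2
  | cons a x' ih =>
    intro y h
    cases y with
    | nil =>
      simp [beta, List.prefix_nil] at h
    | cons b y' =>
      rw [beta_cons, beta_cons] at h
      simp only [List.cons_append, List.cons_prefix_cons] at h
      obtain ⟨h1, h2, h3⟩ := h
      exact ih y' h3

lemma beta_marker_prefix_ex (x : List Bool) : beta x ++ [true, true] <+: ex x := by
  unfold ex
  exact ((((beta x ++ [true, true]).prefix_append _).trans
    (List.prefix_append _ _)).trans (List.prefix_append _ _)).trans (List.prefix_append _ _)

lemma beta_prefix_ex (x : List Bool) : beta x <+: ex x := by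
  exact ((beta x).prefix_append [true, true]).trans (beta_marker_prefix_ex x)

lemma ex_length (x : List Bool) : (ex x).length = 2 * x.length ^ 2 + 4 * x.length + 10 := by
  simp [ex, beta_length]; ring

/-- No word of D is a proper prefix of another word of D: D is a prefix code. -/
theorem stmt_4 (u v : List Bool) (hu : u ∈ D) (huv : u ++ v ∈ D) :
    v = [] := by
  obtain ⟨x, hx⟩ := hu
  obtain ⟨y, hy⟩ := huv
  have hlen : (ex x).length + v.length = (ex y).length := by
    rw [hx, hy]; simp
  rw [ex_length, ex_length] at hlen
  -- show x.length = y.length, hence v.length = 0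
  rcases Nat.lt_or_ge x.length y.length with hlt | hge
  · -- contradiction: marker prefix of beta y
    exfalso
    have hpre : ex x <+: ex y := by
      rw [hy, ← hx]; exact List.prefix_append _ _
    have h1 : beta x ++ [true, true] <+: ex y :=
      (beta_marker_prefix_ex x).trans hpre
    have h2 : beta x ++ [true, true] <+: beta y := by
      apply List.prefix_of_prefix_length_le h1 (beta_prefix_ex y)
      simp [beta_length]; omega
    exact no_marker_prefix x y h2
  · have : x.length = y.length := by nlinarith
    have : v.length = 0 := by
      rw [this] at hlen; omega
    exact List.eq_nil_of_length_eq_zero this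
end

section
/- Let A be a DFA over the alphabet Bool with start state s, extended transition function δ, and accepting set F, such that L(A) ⊆ 𝔇. Let t be a coaccessible state (i.e., δ(t, w) ∈ F for some word w), let k ∈ ℕ, and let m be a state. Then there is at most one word u such that u·u ∈ D, |u| = k, δ(s, u) = m, and δ(m, u) = t: if u and v both satisfy these conditions, then u = v. -/
/-- 𝔇 is the set of all extensions of words of D. -/
def Dext : Set (List Bool) := {w | ∃ u ∈ D, ∃ v : List Bool, w = u ++ v}

lemma key : ∀ (x z r r' : List Bool),
    (beta x ++ [true, true] ++ r) <+: (beta z ++ [true, true] ++ r') → x = z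
  | [], [], _, _, _ => rfl
  | [], b :: z, r, r', h => by
      simp only [beta, List.flatMap_nil, List.nil_append, List.flatMap_cons, List.cons_append,
        List.append_assoc, List.cons_prefix_cons] at h
      obtain ⟨h1, h2, -⟩ := h
      simp [← h1] at h2
  | a :: x, [], r, r', h => by
      simp only [beta, List.flatMap_nil, List.nil_append, List.flatMap_cons, List.cons_append,
        List.append_assoc, List.cons_prefix_cons] at h
      obtain ⟨h1, h2, -⟩ := h
      simp [h1] at h2
  | a :: x, b :: z, r, r', h => by
      simp only [beta, List.flatMap_cons, List.cons_append, List.append_assoc,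
        List.cons_prefix_cons] at h
      obtain ⟨h1, -, h3⟩ := h
      have := key x z r r' (by simpa [beta, List.append_assoc] using h3)
      rw [h1, this]

lemma decomp (x u : List Bool) (h : ex x = u ++ u) :
    u = beta x ++ [true, true] ++ List.replicate (x.length ^ 2 + 3) false := by
  set h0 := beta x ++ [true, true] ++ List.replicate (x.length ^ 2 + 3) false with hh
  have he : h0 ++ h0 = u ++ u := by
    rw [← h]; simp [ex, hh, List.append_assoc]
  have hlen : h0.length = u.length := by
    have := congrArg List.length he
    simp only [List.length_append] at this
    omega
  exact ((List.append_inj he hlen).1).symm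

/-- If L(A) ⊆ 𝔇, a square u·u ∈ D with prefixes in L(A) is determined by the
middle state, a coaccessible final state and the length of u. -/
theorem stmt_12 (Q : Type) (A : DFA Bool Q)
    (hL : ∀ w ∈ A.accepts, w ∈ Dext)
    (t : Q) (hco : ∃ w : List Bool, A.evalFrom t w ∈ A.accept)
    (k : ℕ) (m : Q) (u v : List Bool)
    (hu : u ++ u ∈ D ∧ u.length = k ∧ A.eval u = m ∧ A.evalFrom m u = t)
    (hv : v ++ v ∈ D ∧ v.length = k ∧ A.eval v = m ∧ A.evalFrom m v = t) :
    u = v := by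
  obtain ⟨hu1, -, hu3, hu4⟩ := hu
  obtain ⟨hv1, -, hv3, hv4⟩ := hv
  obtain ⟨x, hx⟩ := hu1
  obtain ⟨y, hy⟩ := hv1
  obtain ⟨w, hw⟩ := hco
  have hux := decomp x u hx
  have hvy := decomp y v hy
  have hacc : (u ++ v ++ w) ∈ A.accepts := by
    rw [DFA.mem_accepts]
    show A.evalFrom A.start (u ++ v ++ w) ∈ A.accept
    rw [DFA.evalFrom_of_append, DFA.evalFrom_of_append]
    have : A.evalFrom A.start u = m := hu3
    rw [this, hv4]
    exact hw
  obtain ⟨d, ⟨z, hz⟩, rest, hrest⟩ := hL _ hacc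
  -- hrest : u ++ v ++ w = ex z ++ rest
  rw [← hz] at hrest
  have E1 : beta x ++ [true, true] ++ (List.replicate (x.length ^ 2 + 3) false ++ (v ++ w))
      = beta z ++ [true, true] ++ (List.replicate (z.length ^ 2 + 3) false ++
        (beta z ++ ([true, true] ++ (List.replicate (z.length ^ 2 + 3) false ++ rest)))) := by
    rw [hux] at hrest
    simpa [ex, List.append_assoc] using hrest
  have hxz : x = z := key x z
    (List.replicate (x.length ^ 2 + 3) false ++ (v ++ w))
    (List.replicate (z.length ^ 2 + 3) false ++
      (beta z ++ ([true, true] ++ (List.replicate (z.length ^ 2 + 3) false ++ rest))))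
    ⟨[], by simp [E1]⟩
  subst hxz
  have E2 : v ++ w = u ++ rest := by
    have h5 : u ++ (v ++ w) = u ++ (u ++ rest) := by
      rw [← List.append_assoc, hrest, hx, List.append_assoc]
    exact List.append_cancel_left h5
  have E3 : beta y ++ [true, true] ++ (List.replicate (y.length ^ 2 + 3) false ++ w)
      = beta x ++ [true, true] ++ (List.replicate (x.length ^ 2 + 3) false ++ rest) := by
    rw [hvy, hux] at E2
    simpa [List.append_assoc] using E2
  have hyx : y = x := key y x
    (List.replicate (y.length ^ 2 + 3) false ++ w)
    (List.replicate (x.length ^ 2 + 3) false ++ rest)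
    ⟨[], by simp [E3]⟩
  subst hyx
  rw [hux, hvy]
end
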